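/- arXiv:0812.3448 — 5 statements merged into one kernel-verified Lean document; each statement's English description precedes it below -/
import Mathlib

section
/- Let g be a totally symmetric third-order tensor on ℝ² with g₁₁₁(0) = 0 and g₁₂₂(0) = 0. Then g₁₁₁(±2π/3) = 3 g₁₂₂(±2π/3) = ±(3√3/8)(g₁₁₂(0) + g₂₂₂(0)), where g_{αβγ}(θ) denotes the components in the basis rotated by θ. -/
noncomputable section

/-- The standard orthonormal basis of ℝ². -/
def e : Fin 2 → (Fin 2 → ℝ) := fun i => Pi.single i 1

/-- The basis rotated by angle θ: k'₁ = cos θ k₁ + sin θ k₂, k'₂ = -sin θ k₁ + cos θ k₂. -/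
def krot (θ : ℝ) : Fin 2 → (Fin 2 → ℝ) := fun α =>
  if α = 0 then Real.cos θ • e 0 + Real.sin θ • e 1
  else (-Real.sin θ) • e 0 + Real.cos θ • e 1

/-- Third-order tensors on ℝ² as trilinear maps. -/
abbrev Tri := (Fin 2 → ℝ) →ₗ[ℝ] (Fin 2 → ℝ) →ₗ[ℝ] (Fin 2 → ℝ) →ₗ[ℝ] ℝ

/-- Total symmetry: invariance under all permutations of the arguments. -/
def Sym3 (g : Tri) : Prop :=
  (∀ x y z, g x y z = g y x z) ∧ (∀ x y z, g x y z = g x z y)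

/-- The components g_{αβγ}(θ) = g(k'_α, k'_β, k'_γ) in the basis rotated by θ. -/
def comp (g : Tri) (θ : ℝ) (α β γ : Fin 2) : ℝ := g (krot θ α) (krot θ β) (krot θ γ)

/-! A totally symmetric trilinear form on ℝ² is a binary cubic, so its rotated components are cubic
polynomials in `cos θ` and `sin θ` with coefficients `g₁₁₁(0), g₁₁₂(0), g₁₂₂(0), g₂₂₂(0)`. When
`g₁₁₁(0) = g₁₂₂(0) = 0` only `g₁₁₂(0)` and `g₂₂₂(0)` survive, and it remains to substitute
`cos (±2π/3) = -1/2` and `sin (±2π/3) = ±√3/2`. -/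

open Real

theorem Real.cos_two_mul_pi_div_three : cos (2 * π / 3) = -(1 / 2) := by
  rw [show 2 * π / 3 = π - π / 3 by ring, cos_pi_sub, cos_pi_div_three]

theorem Real.sin_two_mul_pi_div_three : sin (2 * π / 3) = √3 / 2 := by
  rw [show 2 * π / 3 = π - π / 3 by ring, sin_pi_sub, sin_pi_div_three]

theorem krot_zero (α : Fin 2) : krot 0 α = e α := by
  fin_cases α <;> simp [krot]

theorem comp_zero (g : Tri) (α β γ : Fin 2) : comp g 0 α β γ = g (e α) (e β) (e γ) := by
  simp only [comp, krot_zero]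

section Rotation

variable {g : Tri}

theorem Sym3.apply_comm₁₃ (hg : Sym3 g) (x y z : Fin 2 → ℝ) : g x y z = g z y x := by
  rw [hg.1, hg.2, hg.1]

theorem Sym3.comp_rot_000 (hg : Sym3 g) (θ : ℝ) :
    comp g θ 0 0 0 = cos θ ^ 3 * comp g 0 0 0 0 + 3 * cos θ ^ 2 * sin θ * comp g 0 0 0 1
      + 3 * cos θ * sin θ ^ 2 * comp g 0 0 1 1 + sin θ ^ 3 * comp g 0 1 1 1 := by
  simp only [comp_zero]
  simp only [comp, krot, if_true, map_add, map_smul, LinearMap.add_apply,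
    LinearMap.smul_apply, smul_eq_mul, hg.apply_comm₁₃ (e 1) (e 0) (e 0),
    hg.2 (e 0) (e 1) (e 0), hg.1 (e 1) (e 0) (e 1), hg.apply_comm₁₃ (e 1) (e 1) (e 0)]
  ring

theorem Sym3.comp_rot_011 (hg : Sym3 g) (θ : ℝ) :
    comp g θ 0 1 1 = cos θ * sin θ ^ 2 * comp g 0 0 0 0
      + (sin θ ^ 3 - 2 * sin θ * cos θ ^ 2) * comp g 0 0 0 1
      + (cos θ ^ 3 - 2 * cos θ * sin θ ^ 2) * comp g 0 0 1 1
      + sin θ * cos θ ^ 2 * comp g 0 1 1 1 := by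
  simp only [comp_zero]
  simp only [comp, krot, if_true, one_ne_zero, if_false, map_add, map_smul,
    LinearMap.add_apply, LinearMap.smul_apply, smul_eq_mul, hg.apply_comm₁₃ (e 1) (e 0) (e 0),
    hg.2 (e 0) (e 1) (e 0), hg.1 (e 1) (e 0) (e 1), hg.apply_comm₁₃ (e 1) (e 1) (e 0)]
  ring

end Rotation

/-- if g₁₁₁(0) = 0 and g₁₂₂(0) = 0, then
g₁₁₁(±2π/3) = 3 g₁₂₂(±2π/3) = ±(3√3/8)(g₁₁₂(0) + g₂₂₂(0)). -/
theorem stmt5 (g : Tri) (hg : Sym3 g)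
    (h111 : comp g 0 0 0 0 = 0) (h122 : comp g 0 0 1 1 = 0) :
    comp g (2*Real.pi/3) 0 0 0 = 3 * comp g (2*Real.pi/3) 0 1 1 ∧
    comp g (2*Real.pi/3) 0 0 0
      = (3*Real.sqrt 3/8) * (comp g 0 0 0 1 + comp g 0 1 1 1) ∧
    comp g (-(2*Real.pi/3)) 0 0 0 = 3 * comp g (-(2*Real.pi/3)) 0 1 1 ∧
    comp g (-(2*Real.pi/3)) 0 0 0
      = -((3*Real.sqrt 3/8) * (comp g 0 0 0 1 + comp g 0 1 1 1)) := by
  rw [hg.comp_rot_000 (2 * π / 3), hg.comp_rot_011 (2 * π / 3), hg.comp_rot_000 (-(2 * π / 3)),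
    hg.comp_rot_011 (-(2 * π / 3)), cos_neg, sin_neg, cos_two_mul_pi_div_three,
    sin_two_mul_pi_div_three, h111, h122]
  have hs3 : √3 ^ 2 = 3 := sq_sqrt (by norm_num)
  set b := comp g 0 0 0 1
  set d := comp g 0 1 1 1
  exact ⟨by linear_combination (√3 / 8 * (d - 3 * b)) * hs3,
    by linear_combination (√3 * d / 8) * hs3,
    by linear_combination (√3 / 8 * (3 * b - d)) * hs3,
    by linear_combination (-(√3 * d / 8)) * hs3⟩
end
end

section
/- Let g be a totally symmetric third-order tensor on ℝ² such that g₁₁₁(θ) = g₁₂₂(θ) = 0 for θ = 0 and θ = π/2 (four-fold symmetry, i.e., two orthogonal symmetry planes). Then g = 0, i.e., all four independent components g₁₁₁, g₁₁₂, g₁₂₂, g₂₂₂ vanish. -/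
noncomputable section

/-- four-fold symmetry (g₁₁₁(θ) = g₁₂₂(θ) = 0 for θ = 0 and θ = π/2)
implies g = 0, i.e. all four independent components vanish. -/
theorem stmt7 (g : Tri) (hg : Sym3 g)
    (h0 : comp g 0 0 0 0 = 0 ∧ comp g 0 0 1 1 = 0)
    (hq : comp g (Real.pi/2) 0 0 0 = 0 ∧ comp g (Real.pi/2) 0 1 1 = 0) :
    g = 0 ∧ comp g 0 0 0 0 = 0 ∧ comp g 0 0 0 1 = 0 ∧
      comp g 0 0 1 1 = 0 ∧ comp g 0 1 1 1 = 0 := by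

  obtain ⟨hs1, hs2⟩ := hg
  have k00 : krot 0 0 = e 0 := by
    simp [krot]
  have k01 : krot 0 1 = e 1 := by
    simp [krot]
  have kq0 : krot (Real.pi/2) 0 = e 1 := by
    simp [krot, Real.cos_pi_div_two, Real.sin_pi_div_two]
  have kq1 : krot (Real.pi/2) 1 = -e 0 := by
    simp [krot, Real.cos_pi_div_two, Real.sin_pi_div_two]
  have a000 : g (e 0) (e 0) (e 0) = 0 := by simpa [comp, k00] using h0.1
  have a011 : g (e 0) (e 1) (e 1) = 0 := by simpa [comp, k00, k01] using h0.2
  have a111 : g (e 1) (e 1) (e 1) = 0 := by simpa [comp, kq0] using hq.1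
  have a100 : g (e 1) (e 0) (e 0) = 0 := by
    have h := hq.2
    simp [comp, kq0, kq1, map_neg] at h
    exact h
  have zall : ∀ i j k : Fin 2, g (e i) (e j) (e k) = 0 := by
    intro i j k
    fin_cases i <;> fin_cases j <;> fin_cases k
    · exact a000
    · rw [hs2]; rw [hs1]; exact a100
    · rw [hs1]; exact a100
    · exact a011
    · exact a100
    · rw [hs1]; exact a011
    · rw [hs2, hs1]; exact a011
    · exact a111
  have key : ∀ x y z, g x y z = 0 := by
    intro x y z
    have ex : x = x 0 • e 0 + x 1 • e 1 := by
      funext i; fin_cases i <;> simp [e, Pi.single_apply]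
    have ey : y = y 0 • e 0 + y 1 • e 1 := by
      funext i; fin_cases i <;> simp [e, Pi.single_apply]
    have ez : z = z 0 • e 0 + z 1 • e 1 := by
      funext i; fin_cases i <;> simp [e, Pi.single_apply]
    rw [ex, ey, ez]
    simp [map_add, map_smul, zall]
  have hg0 : g = 0 := by
    ext x y z
    exact key _ _ _
  refine ⟨hg0, h0.1, ?_, h0.2, ?_⟩ <;> simp [comp, hg0]
end
end

section
/- The quantity μ = g₁₁₂² + g₁₂₂² - g₁₁₂ g₂₂₂ - g₁₂₂ g₁₁₁ associated with a totally symmetric third-order tensor g on ℝ² is invariant under rotations: μ(θ) = μ(0) for all θ, where μ(θ) is computed from the components in the basis rotated by θ. -/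
noncomputable section

def muAt (g : Tri) (θ : ℝ) : ℝ :=
  (comp g θ 0 0 1)^2 + (comp g θ 0 1 1)^2
    - comp g θ 0 0 1 * comp g θ 1 1 1
    - comp g θ 0 1 1 * comp g θ 0 0 0

/-- μ is invariant under rotations: μ(θ) = μ(0) for all θ. -/
theorem stmt10 (g : Tri) (hg : Sym3 g) (θ : ℝ) : muAt g θ = muAt g 0 := by
  obtain ⟨h1, h2⟩ := hg
  have e100 : g (e 1) (e 0) (e 0) = g (e 0) (e 0) (e 1) := by rw [h1, h2]
  have e010 : g (e 0) (e 1) (e 0) = g (e 0) (e 0) (e 1) := by rw [h2]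
  have e101 : g (e 1) (e 0) (e 1) = g (e 0) (e 1) (e 1) := by rw [h1]
  have e110 : g (e 1) (e 1) (e 0) = g (e 0) (e 1) (e 1) := by rw [h1, h2, h1]
  have hpyth := Real.sin_sq_add_cos_sq θ
  have k0 : ∀ φ, krot φ 0 = Real.cos φ • e 0 + Real.sin φ • e 1 := fun φ => rfl
  have k1 : ∀ φ, krot φ 1 = (-Real.sin φ) • e 0 + Real.cos φ • e 1 := fun φ => rfl
  simp only [muAt, comp, k0, k1, map_add, map_smul,
    LinearMap.add_apply, LinearMap.smul_apply, smul_eq_mul, Real.cos_zero, Real.sin_zero,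
    neg_zero, zero_smul, one_smul, zero_add, add_zero, zero_mul, mul_zero, map_zero,
    LinearMap.zero_apply, e100, e010, e101, e110]
  ring_nf
  ring_nf
  set a := g (e 0) (e 0) (e 0)
  set b := g (e 0) (e 0) (e 1)
  set c := g (e 0) (e 1) (e 1)
  set d := g (e 1) (e 1) (e 1)
  set p := Real.sin θ ^ 2 + Real.cos θ ^ 2 with hp
  linear_combination (b^2 + c^2 - b*d - c*a) * (p^2 + p + 1) * hpyth
end
end

section
/- For a totally symmetric third-order tensor g on ℝ² with trace-part invariant γ₁ = ¾[(g₁₁₁ + g₁₂₂)² + (g₁₁₂ + g₂₂₂)²] and harmonic-part invariant γ₃ = ¼[(3g₁₂₂ - g₁₁₁)² + (3g₁₁₂ - g₂₂₂)²], the quantity μ = g₁₁₂² + g₁₂₂² - g₁₁₂ g₂₂₂ - g₁₂₂ g₁₁₁ satisfies μ = ½γ₃ - (1/6)γ₁. Consequently, the decoupling condition μ = 0 is equivalent to γ₁ = 3γ₃. -/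
noncomputable section

/-- with γ₁ = ¾[(g₁₁₁+g₁₂₂)² + (g₁₁₂+g₂₂₂)²],
γ₃ = ¼[(3g₁₂₂-g₁₁₁)² + (3g₁₁₂-g₂₂₂)²] and
μ = g₁₁₂² + g₁₂₂² - g₁₁₂ g₂₂₂ - g₁₂₂ g₁₁₁, one has μ = ½γ₃ - (1/6)γ₁;
consequently μ = 0 iff γ₁ = 3γ₃. -/
theorem stmt14 (g : Tri) (hg : Sym3 g)
    (γ1 γ3 μ : ℝ)
    (hγ1 : γ1 = (3/4) * ((comp g 0 0 0 0 + comp g 0 0 1 1)^2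
        + (comp g 0 0 0 1 + comp g 0 1 1 1)^2))
    (hγ3 : γ3 = (1/4) * ((3 * comp g 0 0 1 1 - comp g 0 0 0 0)^2
        + (3 * comp g 0 0 0 1 - comp g 0 1 1 1)^2))
    (hμ : μ = (comp g 0 0 0 1)^2 + (comp g 0 0 1 1)^2
        - comp g 0 0 0 1 * comp g 0 1 1 1 - comp g 0 0 1 1 * comp g 0 0 0 0) :
    μ = (1/2) * γ3 - (1/6) * γ1 ∧ (μ = 0 ↔ γ1 = 3 * γ3) := by
  subst hγ1 hγ3 hμ
  constructor
  · ring
  · constructor <;> intro h <;> nlinarith [h]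
end
end

section
/- Let E = ½(n⊗k₂ + k₂⊗n) with n = (1,1,1)/√3 and k₂ = (-1,-1,2)/√6. For the cubic third-order energy form c_{abcdef}E_{ab}E_{cd}E_{ef} = c₁₁₁(I₁³ - 3I₁I₂ + 3I₄) + 3c₁₁₂(I₁I₂ - 3I₄) + 12c₁₄₄(I₁I₃ - I₆) + 6c₁₂₃I₄ + 48c₄₅₆I₅ + 12c₁₆₆I₆, where I₁ = tr E, I₂ = E₁₁E₂₂ + E₂₂E₃₃ + E₃₃E₁₁, I₃ = E₁₂² + E₂₃² + E₃₁², I₄ = E₁₁E₂₂E₃₃, I₅ = E₁₂E₂₃E₃₁, I₆ = (E₁₁+E₂₂)E₁₂² + (E₂₂+E₃₃)E₂₃² + (E₃₃+E₁₁)E₃₁², the value equals (1/(9√2))[c₁₁₁ + 2c₁₂₃ - 2c₄₅₆ - 3(c₁₁₂ - c₁₄₄ + c₁₆₆)]. -/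
/-!
Since n ∝ (1,1,1), the entries of E are `(v a + v b) √2/12` with `v = (-1,-1,2)`, i.e.
`E = s • M` with `s = √2/12` and `M = !![-2,-2,1; -2,-2,1; 1,1,4]`. Each invariant Iₖ is
homogeneous, and for M they are `I₁ = 0, I₂ = -12, I₃ = 6, I₄ = 16, I₅ = -2, I₆ = -12`, so the
cubic form equals `48 s³ (c₁₁₁ + 2c₁₂₃ - 2c₄₅₆ - 3(c₁₁₂ - c₁₄₄ + c₁₆₆))`, and `48 s³ = 1/(9√2)`.
-/

noncomputable section

/-- The propagation direction n = (1,1,1)/√3. -/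
def nvec : Fin 3 → ℝ := fun _ => 1 / Real.sqrt 3

/-- The transverse direction k₂ = (-1,-1,2)/√6. -/
def kvec : Fin 3 → ℝ := ![-1 / Real.sqrt 6, -1 / Real.sqrt 6, 2 / Real.sqrt 6]

/-- The strain E = ½(n⊗k₂ + k₂⊗n). -/
def E : Matrix (Fin 3) (Fin 3) ℝ :=
  Matrix.of fun a b => (1/2) * (nvec a * kvec b + kvec a * nvec b)

def I1 : ℝ := E 0 0 + E 1 1 + E 2 2
def I2 : ℝ := E 0 0 * E 1 1 + E 1 1 * E 2 2 + E 2 2 * E 0 0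
def I3 : ℝ := (E 0 1)^2 + (E 1 2)^2 + (E 2 0)^2
def I4 : ℝ := E 0 0 * E 1 1 * E 2 2
def I5 : ℝ := E 0 1 * E 1 2 * E 2 0
def I6 : ℝ := (E 0 0 + E 1 1) * (E 0 1)^2 + (E 1 1 + E 2 2) * (E 1 2)^2
  + (E 2 2 + E 0 0) * (E 2 0)^2

lemma sqrt_three_mul_sqrt_six_mul_sqrt_two : √3 * √6 * √2 = 6 := by
  rw [← Real.sqrt_mul (by norm_num), ← Real.sqrt_mul (by norm_num),
    show (3 : ℝ) * 6 * 2 = 6 ^ 2 by norm_num, Real.sqrt_sq (by norm_num)]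

lemma E_eq_smul : E = (√2 / 12) • !![-2, -2, 1; -2, -2, 1; 1, 1, 4] := by
  have h3 : √3 ≠ 0 := by positivity
  have h6 : √6 ≠ 0 := by positivity
  ext a b
  fin_cases a <;> fin_cases b <;>
    simp only [E, nvec, kvec, Fin.zero_eta, Fin.mk_one, Fin.reduceFinMk, Matrix.of_apply,
      Matrix.smul_apply, smul_eq_mul, Matrix.cons_val] <;>
    field_simp <;>
    linarith [sqrt_three_mul_sqrt_six_mul_sqrt_two]

lemma I1_eq : I1 = 0 := by
  simp only [I1, E_eq_smul, Matrix.smul_apply, smul_eq_mul, Matrix.of_apply, Matrix.cons_val]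
  ring

lemma I2_eq : I2 = -12 * (√2 / 12) ^ 2 := by
  simp only [I2, E_eq_smul, Matrix.smul_apply, smul_eq_mul, Matrix.of_apply, Matrix.cons_val]
  ring

lemma I3_eq : I3 = 6 * (√2 / 12) ^ 2 := by
  simp only [I3, E_eq_smul, Matrix.smul_apply, smul_eq_mul, Matrix.of_apply, Matrix.cons_val]
  ring

lemma I4_eq : I4 = 16 * (√2 / 12) ^ 3 := by
  simp only [I4, E_eq_smul, Matrix.smul_apply, smul_eq_mul, Matrix.of_apply, Matrix.cons_val]
  ring

lemma I5_eq : I5 = -2 * (√2 / 12) ^ 3 := by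
  simp only [I5, E_eq_smul, Matrix.smul_apply, smul_eq_mul, Matrix.of_apply, Matrix.cons_val]
  ring

lemma I6_eq : I6 = -12 * (√2 / 12) ^ 3 := by
  simp only [I6, E_eq_smul, Matrix.smul_apply, smul_eq_mul, Matrix.of_apply, Matrix.cons_val]
  ring

lemma forty_eight_mul_sqrt_two_div_twelve_pow_three : 48 * (√2 / 12) ^ 3 = 1 / (9 * √2) := by
  have h2 : √2 ^ 2 = 2 := Real.sq_sqrt (by norm_num)
  field_simp
  linear_combination 432 * (√2 ^ 2 + 2) * h2

/-- for E = ½(n⊗k₂ + k₂⊗n) with n = (1,1,1)/√3 and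
k₂ = (-1,-1,2)/√6, the cubic third-order energy form
c_{abcdef}E_{ab}E_{cd}E_{ef} evaluates to
(1/(9√2))[c₁₁₁ + 2c₁₂₃ - 2c₄₅₆ - 3(c₁₁₂ - c₁₄₄ + c₁₆₆)]. -/
theorem stmt19 (c111 c112 c144 c123 c456 c166 : ℝ) :
    c111 * (I1^3 - 3*I1*I2 + 3*I4) + 3*c112 * (I1*I2 - 3*I4)
      + 12*c144 * (I1*I3 - I6) + 6*c123 * I4 + 48*c456 * I5 + 12*c166 * I6
    = (1/(9 * Real.sqrt 2))
        * (c111 + 2*c123 - 2*c456 - 3*(c112 - c144 + c166)) := by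
  rw [I1_eq, I2_eq, I3_eq, I4_eq, I5_eq, I6_eq, ← forty_eight_mul_sqrt_two_div_twelve_pow_three]
  ring
end
end
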